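/- The Lebesgue integral of f over [0,1] equals (1/2)·Σ_{n=1}^∞ (q_n − 1)/q^n; consequently 1/(2(q−1)) ≤ ∫_{[0,1]} f dλ ≤ 1/2. -/

import Mathlib

open Filter Topology MeasureTheory

/-- Product `q_1 ⋯ q_n` of the first `n` bases (0-indexed sequence `a`). -/
noncomputable def cantorProd (a : ℕ → ℕ) (n : ℕ) : ℕ := ∏ j ∈ Finset.range n, a j

/-- The canonical Q-digit of `x` at (0-indexed) position `n`:
`ε_{n+1}(x) = ⌊q_1⋯q_{n+1} x⌋ - q_{n+1} ⌊q_1⋯q_n x⌋`. -/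
noncomputable def cantorDigit (a : ℕ → ℕ) (x : ℝ) (n : ℕ) : ℤ :=
  ⌊(cantorProd a (n + 1) : ℝ) * x⌋ - (a n : ℤ) * ⌊(cantorProd a n : ℝ) * x⌋

/-- The function `f`: for `x < 1`, `f(x) = ∑ ε_n(x)/q^n`; `f(1) = ∑ (q_n - 1)/q^n`. -/
noncomputable def cantorF (a : ℕ → ℕ) (q : ℕ) (x : ℝ) : ℝ :=
  if x < 1 then ∑' n : ℕ, (cantorDigit a x n : ℝ) / (q : ℝ) ^ (n + 1)
  else ∑' n : ℕ, ((a n : ℝ) - 1) / (q : ℝ) ^ (n + 1)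

/-- `x ∈ (0,1)` is Q-rational if it is a finite sum `∑_{i=1}^m c_i/(q_1⋯q_i)`
with digits `0 ≤ c_i ≤ q_i - 1`. -/
def QRational (a : ℕ → ℕ) (x : ℝ) : Prop :=
  x ∈ Set.Ioo (0 : ℝ) 1 ∧
    ∃ m : ℕ, 1 ≤ m ∧ ∃ c : ℕ → ℕ, (∀ i, c i < a i) ∧
      x = ∑ i ∈ Finset.range m, (c i : ℝ) / ∏ j ∈ Finset.range (i + 1), (a j : ℝ)

/-! With `P_n = q_1 ⋯ q_n`, the digit `ε_{n+1}(x) = ⌊P_{n+1} x⌋ - q_{n+1} ⌊P_n x⌋` is a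
difference of step functions, and `∫₀¹ ⌊N x⌋ dx = (N - 1) / 2` because `⌊N x⌋ = N x - fract (N x)`
and `fract` has mean `1 / 2` over each of its `N` periods in `[0, N]`. Hence `∫₀¹ ε_{n+1} =
(q_{n+1} - 1) / 2`. Off the null set `{1}` the function `f` is the series `∑ ε_n / q^n`, whose terms
are nonnegative, so it can be integrated termwise. The bounds follow from `1 ≤ q_n - 1 ≤ q - 1`
and `∑_{n ≥ 1} q^{-n} = 1 / (q - 1)`. -/

lemma monotone_floor_mul {c : ℝ} (hc : 0 ≤ c) : Monotone fun x : ℝ => (⌊c * x⌋ : ℝ) :=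
  fun _ _ hxy => Int.cast_mono (Int.floor_mono (mul_le_mul_of_nonneg_left hxy hc))

lemma intervalIntegrable_fract (t₁ t₂ : ℝ) : IntervalIntegrable Int.fract volume t₁ t₂ := by
  have hfloor : Monotone fun x : ℝ => (⌊x⌋ : ℝ) := by simpa using monotone_floor_mul zero_le_one
  exact intervalIntegral.intervalIntegrable_id.sub hfloor.intervalIntegrable

lemma integral_fract_zero_one : ∫ x in (0 : ℝ)..1, Int.fract x = 1 / 2 := by
  calc ∫ x in (0 : ℝ)..1, Int.fract x = ∫ x in (0 : ℝ)..1, x := by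
        refine intervalIntegral.integral_congr_ae ?_
        filter_upwards [volume.ae_ne 1] with x hx1 hx
        rw [Set.uIoc_of_le zero_le_one] at hx
        exact Int.fract_eq_self.2 ⟨hx.1.le, lt_of_le_of_ne hx.2 hx1⟩
    _ = 1 / 2 := by norm_num [integral_id]

lemma integral_fract_natCast_mul {N : ℕ} (hN : N ≠ 0) :
    ∫ x in (0 : ℝ)..1, Int.fract ((N : ℝ) * x) = 1 / 2 := by
  have hperiod := (Int.fract_periodic ℝ).intervalIntegral_add_zsmul_eq N 0 intervalIntegrable_fract
  simp only [zero_add, zsmul_eq_mul, Int.cast_natCast, mul_one, integral_fract_zero_one] at hperiod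
  rw [intervalIntegral.integral_comp_mul_left _ (Nat.cast_ne_zero.2 hN), mul_zero, mul_one,
    hperiod, smul_eq_mul]
  field_simp

lemma integral_floor_natCast_mul {N : ℕ} (hN : N ≠ 0) :
    ∫ x in (0 : ℝ)..1, (⌊(N : ℝ) * x⌋ : ℝ) = ((N : ℝ) - 1) / 2 := by
  have h := integral_fract_natCast_mul hN
  simp only [Int.fract] at h
  rw [intervalIntegral.integral_sub ((continuous_const_mul _).intervalIntegrable _ _)
    (monotone_floor_mul N.cast_nonneg).intervalIntegrable, intervalIntegral.integral_const_mul,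
    integral_id] at h
  linarith

lemma floor_natCast_mul_sub_mul_floor (m : ℕ) (y : ℝ) :
    ⌊(m : ℝ) * y⌋ - m * ⌊y⌋ = ⌊(m : ℝ) * y⌋ % m := by
  rcases eq_or_ne m 0 with rfl | hm
  · simp
  have hy : ⌊y⌋ = ⌊(m : ℝ) * y⌋ / m := by
    rw [← Int.floor_div_natCast, mul_div_cancel_left₀ _ (Nat.cast_ne_zero.2 hm)]
  rw [hy, Int.emod_def]

section CantorDigit

variable (a : ℕ → ℕ)

lemma cantorProd_succ (n : ℕ) : cantorProd a (n + 1) = cantorProd a n * a n :=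
  Finset.prod_range_succ a n

lemma cantorDigit_eq_emod (x : ℝ) (n : ℕ) :
    cantorDigit a x n = ⌊(cantorProd a (n + 1) : ℝ) * x⌋ % a n := by
  rw [cantorDigit, cantorProd_succ, Nat.cast_mul, mul_comm (cantorProd a n : ℝ), mul_assoc,
    floor_natCast_mul_sub_mul_floor]

lemma cantorDigit_nonneg {n : ℕ} (hn : a n ≠ 0) (x : ℝ) : 0 ≤ cantorDigit a x n := by
  rw [cantorDigit_eq_emod]
  exact Int.emod_nonneg _ (Nat.cast_ne_zero.2 hn)

lemma cantorDigit_cast (x : ℝ) (n : ℕ) :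
    (cantorDigit a x n : ℝ) =
      ⌊(cantorProd a (n + 1) : ℝ) * x⌋ - a n * ⌊(cantorProd a n : ℝ) * x⌋ := by
  simp [cantorDigit]

lemma integrableOn_cantorDigit (n : ℕ) :
    IntegrableOn (fun x => (cantorDigit a x n : ℝ)) (Set.Icc 0 1) := by
  simp_rw [cantorDigit_cast]
  have hfloor : ∀ k, IntegrableOn (fun x => (⌊(cantorProd a k : ℝ) * x⌋ : ℝ)) (Set.Icc 0 1) :=
    fun k => (monotone_floor_mul (Nat.cast_nonneg _)).locallyIntegrable.integrableOn_isCompact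
      isCompact_Icc
  exact (hfloor (n + 1)).sub ((hfloor n).const_mul _)

lemma integral_cantorDigit (ha : ∀ n, a n ≠ 0) (n : ℕ) :
    ∫ x in Set.Icc (0 : ℝ) 1, (cantorDigit a x n : ℝ) = ((a n : ℝ) - 1) / 2 := by
  have hprod : ∀ k, cantorProd a k ≠ 0 := fun k => Finset.prod_ne_zero_iff.2 fun j _ => ha j
  simp_rw [integral_Icc_eq_integral_Ioc, ← intervalIntegral.integral_of_le zero_le_one,
    cantorDigit_cast]
  rw [intervalIntegral.integral_sub (monotone_floor_mul (Nat.cast_nonneg _)).intervalIntegrable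
    ((monotone_floor_mul (Nat.cast_nonneg _)).intervalIntegrable.const_mul _),
    intervalIntegral.integral_const_mul, integral_floor_natCast_mul (hprod _),
    integral_floor_natCast_mul (hprod _), cantorProd_succ]
  push_cast
  ring

end CantorDigit

lemma hasSum_div_pow_succ {r : ℝ} (hr : 1 < r) (c : ℝ) :
    HasSum (fun n : ℕ => c / r ^ (n + 1)) (c / (r - 1)) := by
  have hr0 : r ≠ 0 := by positivity
  have hterm : ∀ n : ℕ, c / r * r⁻¹ ^ n = c / r ^ (n + 1) := fun n => by
    rw [pow_succ, inv_pow]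
    field_simp
  have hsum : c / r * (1 - r⁻¹)⁻¹ = c / (r - 1) := by
    have hr1 : r - 1 ≠ 0 := sub_ne_zero.2 hr.ne'
    rw [← one_div r, one_sub_div hr0]
    field_simp
  simpa only [hterm, hsum] using
    (hasSum_geometric_of_lt_one (by positivity) (inv_lt_one_of_one_lt₀ hr)).mul_left (c / r)

lemma summable_div_pow_succ_of_bounded {r : ℝ} (hr : 1 < r) {b : ℕ → ℝ} {lo hi : ℝ}
    (hlo : ∀ n, lo ≤ b n) (hhi : ∀ n, b n ≤ hi) : Summable fun n => b n / r ^ (n + 1) := by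
  refine (hasSum_div_pow_succ hr (max |lo| |hi|)).summable.of_norm_bounded fun n => ?_
  rw [norm_div, Real.norm_eq_abs, Real.norm_of_nonneg (by positivity)]
  exact div_le_div_of_nonneg_right (abs_le_max_abs_abs (hlo n) (hhi n)) (by positivity)

lemma tsum_div_pow_succ_mem_Icc {r : ℝ} (hr : 1 < r) {b : ℕ → ℝ} {lo hi : ℝ}
    (hlo : ∀ n, lo ≤ b n) (hhi : ∀ n, b n ≤ hi) :
    ∑' n, b n / r ^ (n + 1) ∈ Set.Icc (lo / (r - 1)) (hi / (r - 1)) := by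
  have hb := (summable_div_pow_succ_of_bounded hr hlo hhi).hasSum
  have hpow : ∀ n : ℕ, 0 ≤ r ^ (n + 1) := fun n => by positivity
  exact ⟨hasSum_le (fun n => div_le_div_of_nonneg_right (hlo n) (hpow n))
      (hasSum_div_pow_succ hr lo) hb,
    hasSum_le (fun n => div_le_div_of_nonneg_right (hhi n) (hpow n))
      hb (hasSum_div_pow_succ hr hi)⟩

theorem integral_cantorF {a : ℕ → ℕ} (ha : ∀ n, a n ≠ 0) (q : ℕ)
    (hs : Summable fun n => ((a n : ℝ) - 1) / (q : ℝ) ^ (n + 1)) :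
    ∫ x in Set.Icc (0 : ℝ) 1, cantorF a q x
      = 1 / 2 * ∑' n, ((a n : ℝ) - 1) / (q : ℝ) ^ (n + 1) := by
  set g : ℕ → ℝ → ℝ := fun n x => (cantorDigit a x n : ℝ) / (q : ℝ) ^ (n + 1)
  have hg_int : ∀ n, Integrable (g n) (volume.restrict (Set.Icc 0 1)) := fun n =>
    (integrableOn_cantorDigit a n).div_const _
  have hg : ∀ n,
      ∫ x in Set.Icc (0 : ℝ) 1, g n x = 1 / 2 * (((a n : ℝ) - 1) / (q : ℝ) ^ (n + 1)) := by
    intro n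
    rw [integral_div, integral_cantorDigit a ha]
    ring
  have hg_norm : ∀ n, ∫ x in Set.Icc (0 : ℝ) 1, ‖g n x‖ = ∫ x in Set.Icc (0 : ℝ) 1, g n x :=
    fun n => integral_congr_ae (Filter.Eventually.of_forall fun x => Real.norm_of_nonneg
      (div_nonneg (Int.cast_nonneg (cantorDigit_nonneg a (ha n) x)) (by positivity)))
  have hg_sum : Summable fun n => ∫ x in Set.Icc (0 : ℝ) 1, ‖g n x‖ := by
    simpa only [hg_norm, hg] using hs.mul_left (1 / 2)
  calc ∫ x in Set.Icc (0 : ℝ) 1, cantorF a q x = ∫ x in Set.Icc (0 : ℝ) 1, ∑' n, g n x :=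
        setIntegral_congr_ae measurableSet_Icc <| by
          filter_upwards [volume.ae_ne 1] with x hx1 hx
          exact if_pos (lt_of_le_of_ne hx.2 hx1)
    _ = ∑' n, ∫ x in Set.Icc (0 : ℝ) 1, g n x :=
        (integral_tsum_of_summable_integral_norm hg_int hg_sum).symm
    _ = 1 / 2 * ∑' n, ((a n : ℝ) - 1) / (q : ℝ) ^ (n + 1) := by
        rw [tsum_congr hg, tsum_mul_left]

/-- `∫_{[0,1]} f dλ = (1/2) ∑_{n≥1} (q_n - 1)/q^n`, and consequently
`1/(2(q-1)) ≤ ∫_{[0,1]} f dλ ≤ 1/2`. -/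
theorem stmt8 (q : ℕ) (hq : 2 ≤ q) (a : ℕ → ℕ) (ha : ∀ n, 2 ≤ a n ∧ a n ≤ q) :
    (∫ x in Set.Icc (0 : ℝ) 1, cantorF a q x)
      = (1 / 2) * ∑' n : ℕ, ((a n : ℝ) - 1) / (q : ℝ) ^ (n + 1) ∧
    1 / (2 * ((q : ℝ) - 1)) ≤ (∫ x in Set.Icc (0 : ℝ) 1, cantorF a q x) ∧
    (∫ x in Set.Icc (0 : ℝ) 1, cantorF a q x) ≤ 1 / 2 := by
  have hq1 : (1 : ℝ) < q := by exact_mod_cast hq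
  have hbase_lo : ∀ n, (1 : ℝ) ≤ (a n : ℝ) - 1 := fun n => by
    have : (2 : ℝ) ≤ a n := by exact_mod_cast (ha n).1
    linarith
  have hbase_hi : ∀ n, (a n : ℝ) - 1 ≤ (q : ℝ) - 1 := fun n => by
    have : (a n : ℝ) ≤ q := by exact_mod_cast (ha n).2
    linarith
  have hint := integral_cantorF (fun n => by have := (ha n).1; omega) q
    (summable_div_pow_succ_of_bounded hq1 hbase_lo hbase_hi)
  obtain ⟨hlo, hhi⟩ := tsum_div_pow_succ_mem_Icc hq1 hbase_lo hbase_hi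
  rw [div_self (sub_ne_zero.2 hq1.ne')] at hhi
  refine ⟨hint, ?_, ?_⟩ <;> rw [hint]
  · rw [← one_div_mul_one_div]
    exact mul_le_mul_of_nonneg_left hlo (by norm_num)
  · linarith
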